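/- arXiv:2108.07472 — 2 statements merged into one kernel-verified Lean document; each statement's English description precedes it below -/
import Mathlib

section
/- For every game utility u (with all values u_i(a) in [0,1]) and every pair of mixed strategy profiles σ, σ', the Nash approximation loss is 2-Lipschitz in the strategy profile under the ℓ1-distance: |NashApr(σ, u) − NashApr(σ', u)| ≤ 2‖σ − σ'‖₁. -/
open Finset MeasureTheory

section NashDefs

variable {N : Type*} {A : N → Type*}

/-- `σ` is a mixed strategy profile: each `σ i` is a probability distribution on `A i`. -/
def IsMixedProfile [∀ i, Fintype (A i)] (σ : ∀ i, A i → ℝ) : Prop :=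
  (∀ i a, 0 ≤ σ i a) ∧ ∀ i, ∑ a, σ i a = 1

/-- Expected utility of player `i` when the mixed strategy profile `σ` is played:
`u_i(σ) = ∑_{a ∈ A} (∏_j σ_j(a_j)) u_i(a)`. -/
def expUtil [Fintype N] [DecidableEq N] [∀ i, Fintype (A i)]
    (u : N → (∀ j, A j) → ℝ) (i : N) (σ : ∀ j, A j → ℝ) : ℝ :=
  ∑ a : ∀ j, A j, (∏ j, σ j (a j)) * u i a

/-- The pure strategy of player `i` playing action `b` with probability one. -/
def pureStrat [∀ i, DecidableEq (A i)] {i : N} (b : A i) : A i → ℝ :=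
  fun c => if c = b then 1 else 0

/-- Nash approximation loss:
`NashApr(σ, u) = max_{i ∈ N} max_{b ∈ A_i} [u_i(b, σ_{-i}) - u_i(σ)]`. -/
noncomputable def nashApr [Fintype N] [DecidableEq N] [Nonempty N]
    [∀ i, Fintype (A i)] [∀ i, DecidableEq (A i)] [∀ i, Nonempty (A i)]
    (σ : ∀ i, A i → ℝ) (u : N → (∀ j, A j) → ℝ) : ℝ :=
  Finset.univ.sup' Finset.univ_nonempty fun i : N =>
    Finset.univ.sup' Finset.univ_nonempty fun b : A i =>
      expUtil u i (Function.update σ i (pureStrat b)) - expUtil u i σ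

/-- ℓ1-distance between mixed strategy profiles:
`‖σ - σ'‖₁ = ∑_{i ∈ N} ∑_{a_i ∈ A_i} |σ_i(a_i) - σ'_i(a_i)|`. -/
def dist1 [Fintype N] [∀ i, Fintype (A i)] (σ σ' : ∀ i, A i → ℝ) : ℝ :=
  ∑ i, ∑ a, |σ i a - σ' i a|

/-- ℓmax-distance between game utilities:
`‖u - v‖max = max_{i ∈ N} max_{a ∈ A} |u_i(a) - v_i(a)|`. -/
noncomputable def distMax [Fintype N] [DecidableEq N] [Nonempty N]
    [∀ i, Fintype (A i)] [∀ i, Nonempty (A i)]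
    (u v : N → (∀ j, A j) → ℝ) : ℝ :=
  Finset.univ.sup' Finset.univ_nonempty fun i : N =>
    Finset.univ.sup' Finset.univ_nonempty fun a : ∀ j, A j => |u i a - v i a|

end NashDefs

/-!
Expected utility is multilinear in the mixed strategies, and with utilities bounded by `1` in
absolute value, changing the strategy of a single player `k` from `p` to `q` moves it by at most
`∑ₓ |p x - q x|`. Replacing the players' strategies one at a time (a hybrid argument) bounds the
change of every expected utility by `‖σ - σ'‖₁`. Giving player `i` the same pure strategy `b` in
both profiles does not increase their distance, so each term `u_i(b, σ_{-i}) - u_i(σ)` of the Nash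
approximation loss moves by at most `2‖σ - σ'‖₁`, and so does their maximum.
-/

open Function

section Profiles

variable {N : Type*} {A : N → Type*} [∀ i, Fintype (A i)]

lemma IsMixedProfile.update_strategy [DecidableEq N] {σ : ∀ i, A i → ℝ}
    (hσ : IsMixedProfile σ) (i : N) {p : A i → ℝ} (hp : (∀ a, 0 ≤ p a) ∧ ∑ a, p a = 1) :
    IsMixedProfile (update σ i p) :=
  ⟨fun j a => by rcases eq_or_ne j i with rfl | h <;> simp [*, hσ.1 j a],
    fun j => by rcases eq_or_ne j i with rfl | h <;> simp [*, hσ.2 j]⟩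

lemma IsMixedProfile.piecewise [DecidableEq N] {τ τ' : ∀ j, A j → ℝ} (hτ : IsMixedProfile τ)
    (hτ' : IsMixedProfile τ') (s : Finset N) : IsMixedProfile (s.piecewise τ' τ) :=
  ⟨fun j a => s.piecewise_cases τ' τ (fun t : A j → ℝ => 0 ≤ t a) (hτ'.1 j a) (hτ.1 j a),
    fun j => s.piecewise_cases τ' τ (fun t : A j → ℝ => ∑ x, t x = 1) (hτ'.2 j) (hτ.2 j)⟩

lemma pureStrat_isDistribution [∀ i, DecidableEq (A i)] {i : N} (b : A i) :
    (∀ a, 0 ≤ pureStrat b a) ∧ ∑ a, pureStrat b a = 1 :=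
  ⟨fun a => by unfold pureStrat; split_ifs <;> norm_num, by simp [pureStrat]⟩

lemma dist1_comm [Fintype N] (σ σ' : ∀ i, A i → ℝ) : dist1 σ σ' = dist1 σ' σ := by
  simp only [dist1, abs_sub_comm]

lemma dist1_update_le [Fintype N] [DecidableEq N] (σ σ' : ∀ i, A i → ℝ) (i : N) (p : A i → ℝ) :
    dist1 (update σ i p) (update σ' i p) ≤ dist1 σ σ' := by
  refine sum_le_sum fun j _ => ?_
  rcases eq_or_ne j i with rfl | h
  · simpa using sum_nonneg fun a _ => abs_nonneg (σ j a - σ' j a)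
  · simp [h]

end Profiles

section ExpectedUtility

variable {N : Type*} [Fintype N] [DecidableEq N] {A : N → Type*} [∀ i, Fintype (A i)]

omit [∀ i, Fintype (A i)] in
lemma prod_update_apply (τ : ∀ j, A j → ℝ) (k : N) (r : A k → ℝ) (a : ∀ j, A j) :
    ∏ j, update τ k r j (a j) = r (a k) * ∏ j ∈ univ \ {k}, τ j (a j) := by
  simp_rw [apply_update (fun j (t : A j → ℝ) => t (a j))]
  exact prod_update_of_mem (mem_univ k) _ _

lemma expUtil_update_sub (u : N → (∀ j, A j) → ℝ) (i : N) (τ : ∀ j, A j → ℝ) (k : N)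
    (p q : A k → ℝ) :
    expUtil u i (update τ k p) - expUtil u i (update τ k q) = expUtil u i (update τ k (p - q)) := by
  simp only [expUtil, ← sum_sub_distrib, ← sub_mul, prod_update_apply, Pi.sub_apply]

lemma abs_expUtil_le {u : N → (∀ j, A j) → ℝ} {i : N} (hu : ∀ a, |u i a| ≤ 1)
    (τ : ∀ j, A j → ℝ) : |expUtil u i τ| ≤ ∏ j, ∑ x, |τ j x| :=
  calc |expUtil u i τ| ≤ ∑ a : ∀ j, A j, |(∏ j, τ j (a j)) * u i a| := abs_sum_le_sum_abs _ _
    _ ≤ ∑ a : ∀ j, A j, ∏ j, |τ j (a j)| := sum_le_sum fun a _ => by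
        rw [abs_mul, abs_prod]
        exact mul_le_of_le_one_right (prod_nonneg fun j _ => abs_nonneg _) (hu a)
    _ = ∏ j, ∑ x, |τ j x| := (Fintype.prod_sum fun j x => |τ j x|).symm

lemma IsMixedProfile.prod_sum_abs_update {τ : ∀ j, A j → ℝ} (hτ : IsMixedProfile τ) (k : N)
    (r : A k → ℝ) : ∏ j, ∑ x, |update τ k r j x| = ∑ x, |r x| := by
  simp_rw [apply_update (fun j (t : A j → ℝ) => ∑ x, |t x|)]
  rw [prod_update_of_mem (mem_univ k), prod_eq_one fun j _ => ?_, mul_one]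
  simp_rw [abs_of_nonneg (hτ.1 j _), hτ.2 j]

lemma IsMixedProfile.abs_expUtil_update_sub_le {u : N → (∀ j, A j) → ℝ} {i : N}
    (hu : ∀ a, |u i a| ≤ 1) {τ : ∀ j, A j → ℝ} (hτ : IsMixedProfile τ) (k : N)
    (p q : A k → ℝ) :
    |expUtil u i (update τ k p) - expUtil u i (update τ k q)| ≤ ∑ x, |p x - q x| := by
  rw [expUtil_update_sub, ← hτ.prod_sum_abs_update k]
  exact abs_expUtil_le hu _

lemma IsMixedProfile.abs_expUtil_sub_piecewise_le {u : N → (∀ j, A j) → ℝ} {i : N}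
    (hu : ∀ a, |u i a| ≤ 1) {τ τ' : ∀ j, A j → ℝ} (hτ : IsMixedProfile τ)
    (hτ' : IsMixedProfile τ') (s : Finset N) :
    |expUtil u i τ - expUtil u i (s.piecewise τ' τ)| ≤ ∑ j ∈ s, ∑ x, |τ j x - τ' j x| := by
  induction s using Finset.induction with
  | empty => simp
  | insert k s hk ih =>
    set hybrid := s.piecewise τ' τ
    have hybrid_eq : update hybrid k (τ k) = hybrid := by
      rw [← s.piecewise_eq_of_notMem τ' τ hk, update_eq_self]
    calc |expUtil u i τ - expUtil u i ((insert k s).piecewise τ' τ)|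
        ≤ |expUtil u i τ - expUtil u i hybrid|
          + |expUtil u i (update hybrid k (τ k)) - expUtil u i (update hybrid k (τ' k))| := by
          rw [hybrid_eq, piecewise_insert]
          exact abs_sub_le _ _ _
      _ ≤ ∑ j ∈ s, ∑ x, |τ j x - τ' j x| + ∑ x, |τ k x - τ' k x| :=
          add_le_add ih ((hτ.piecewise hτ' s).abs_expUtil_update_sub_le hu k _ _)
      _ = ∑ j ∈ insert k s, ∑ x, |τ j x - τ' j x| := by rw [sum_insert hk, add_comm]

lemma IsMixedProfile.abs_expUtil_sub_le {u : N → (∀ j, A j) → ℝ} {i : N}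
    (hu : ∀ a, |u i a| ≤ 1) {τ τ' : ∀ j, A j → ℝ} (hτ : IsMixedProfile τ)
    (hτ' : IsMixedProfile τ') : |expUtil u i τ - expUtil u i τ'| ≤ dist1 τ τ' := by
  simpa [dist1] using hτ.abs_expUtil_sub_piecewise_le hu hτ' univ

end ExpectedUtility

section NashApr

variable {N : Type*} [Fintype N] [DecidableEq N] [Nonempty N] {A : N → Type*}
  [∀ i, Fintype (A i)] [∀ i, DecidableEq (A i)] [∀ i, Nonempty (A i)]

lemma expUtil_update_pureStrat_sub_le_nashApr (σ : ∀ i, A i → ℝ) (u : N → (∀ j, A j) → ℝ)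
    (i : N) (b : A i) : expUtil u i (update σ i (pureStrat b)) - expUtil u i σ ≤ nashApr σ u := by
  simp only [nashApr, le_sup'_iff]
  exact ⟨i, mem_univ i, b, mem_univ b, le_rfl⟩

lemma nashApr_le_add_two_mul_dist1 {u : N → (∀ j, A j) → ℝ} (hu : ∀ i a, |u i a| ≤ 1)
    {σ σ' : ∀ i, A i → ℝ} (hσ : IsMixedProfile σ) (hσ' : IsMixedProfile σ') :
    nashApr σ u ≤ nashApr σ' u + 2 * dist1 σ σ' := by
  refine sup'_le _ _ fun i _ => sup'_le _ _ fun b _ => ?_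
  have deviation := ((hσ.update_strategy i (pureStrat_isDistribution b)).abs_expUtil_sub_le (hu i)
    (hσ'.update_strategy i (pureStrat_isDistribution b))).trans (dist1_update_le σ σ' i _)
  have current := hσ.abs_expUtil_sub_le (hu i) hσ'
  have le_nashApr := expUtil_update_pureStrat_sub_le_nashApr σ' u i b
  linarith [abs_le.1 deviation, abs_le.1 current]

end NashApr

theorem nashApr_lipschitz_in_strategy
    {N : Type*} [Fintype N] [DecidableEq N] [Nonempty N]
    {A : N → Type*} [∀ i, Fintype (A i)] [∀ i, DecidableEq (A i)] [∀ i, Nonempty (A i)]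
    (u : N → (∀ j, A j) → ℝ) (hu : ∀ i a, u i a ∈ Set.Icc (0 : ℝ) 1)
    (σ σ' : ∀ i, A i → ℝ) (hσ : IsMixedProfile σ) (hσ' : IsMixedProfile σ') :
    |nashApr σ u - nashApr σ' u| ≤ 2 * dist1 σ σ' := by
  have hu' : ∀ i a, |u i a| ≤ 1 := fun i a =>
    (abs_of_nonneg (hu i a).1).trans_le (hu i a).2
  rw [abs_sub_le_iff]
  constructor
  · linarith [nashApr_le_add_two_mul_dist1 hu' hσ hσ']
  · linarith [nashApr_le_add_two_mul_dist1 hu' hσ' hσ, dist1_comm σ σ']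
end

section
/- Covering number of a Lipschitz hypothesis class: Let each action set satisfy |A_i| ≥ 2, write d = Σ_{i∈N} |A|·1 summed over players so that game utilities are points of [0,1]^{n·|A|} where n = |N| and |A| = ∏_{i∈N} |A_i|. Let H be a set of NE approximators that is L-Lipschitz, i.e., for some constant L > 0 every h ∈ H satisfies ‖h(u) − h(v)‖₁ ≤ L·‖u − v‖max for all u, v ∈ U. Then for every r with 0 < r < 4 there exists a finite set C of NE approximators that r-covers H whose cardinality satisfies ln |C| ≤ ⌈4L/r⌉^{n·|A|} · Σ_{i∈N} (|A_i| − 1) · ln( (40·e·n·|A_i|/r + e·|A_i|) / (|A_i| − 1) ). In particular, the r-covering number N_{∞,1}(H, r), defined as the minimal cardinality of a set of NE approximators that r-covers H, is bounded by this quantity. -/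
open Finset MeasureTheory

/-- The set of all game utilities (with values in `[0,1]`) for fixed players `N`
and action space `A`, as a subtype. -/
abbrev GameUtil (N : Type*) (A : N → Type*) : Type _ :=
  {u : N → (∀ j, A j) → ℝ // ∀ i a, u i a ∈ Set.Icc (0 : ℝ) 1}

/-- An NE approximator maps game utilities to mixed strategy profiles. -/
abbrev NEApprox (N : Type*) (A : N → Type*) [∀ i, Fintype (A i)] : Type _ :=
  {h : GameUtil N A → ∀ i, A i → ℝ // ∀ u, IsMixedProfile (h u)}

section Risk

variable {N : Type*} {A : N → Type*} [Fintype N] [DecidableEq N] [Nonempty N]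
  [∀ i, Fintype (A i)] [∀ i, DecidableEq (A i)] [∀ i, Nonempty (A i)]

/-- Nash approximation loss of an NE approximator on a game. -/
noncomputable def nashLoss (h : NEApprox N A) (u : GameUtil N A) : ℝ :=
  nashApr (h.1 u) u.1

/-- True risk `L_D(h) = E_{u ∼ D}[NashApr(h(u), u)]`. -/
noncomputable def trueRisk (D : Measure (GameUtil N A)) (h : NEApprox N A) : ℝ :=
  ∫ u, nashLoss h u ∂D

/-- Empirical risk `L_S(h) = (1/m) ∑_j NashApr(h(u⁽ʲ⁾), u⁽ʲ⁾)`. -/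
noncomputable def empRisk {m : ℕ} (S : Fin m → GameUtil N A) (h : NEApprox N A) : ℝ :=
  (1 / (m : ℝ)) * ∑ j, nashLoss h (S j)

/-- `C` `r`-covers `H` under the `ℓ_{∞,1}`-distance:
every `h ∈ H` is within `ℓ_{∞,1}`-distance `r` of some `g ∈ C`. -/
def Covers (r : ℝ) (C : Finset (NEApprox N A)) (H : Set (NEApprox N A)) : Prop :=
  ∀ h ∈ H, ∃ g ∈ C, ∀ u, dist1 (h.1 u) (g.1 u) ≤ r

end Risk

/-!
Cut the utility cube `[0,1]^(N × A)` into `M₀ = ⌈4L/r⌉` cells per coordinate: by the Lipschitz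
bound, every `h ∈ H` moves by at most `r/4` inside a cell. On each cell, replace the value of `h`
at the cell's corner by the nearest point of the product `P` of grids in the simplices `Δ(A i)` of
resolution `Mᵢ = ⌈4 n |Aᵢ| / r⌉`, which costs at most `r/2`. There are at most `|P|^(M₀^(n |A|))`
such piecewise constant approximators, and the grid in `Δ(A i)` has at most
`C(Mᵢ + |Aᵢ| - 1, |Aᵢ| - 1) ≤ (e (Mᵢ + |Aᵢ| - 1) / (|Aᵢ| - 1))^(|Aᵢ| - 1)` points.
-/

theorem Real.log_natCast_le_log_natCast {m n : ℕ} (h : m ≤ n) :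
    Real.log m ≤ Real.log n := by
  rcases m.eq_zero_or_pos with rfl | hm
  · simpa using Real.log_natCast_nonneg n
  · exact Real.log_le_log (by exact_mod_cast hm) (by exact_mod_cast h)

theorem Nat.choose_le_exp_one_mul_div_pow {d : ℕ} (hd : 0 < d) (n : ℕ) :
    (n.choose d : ℝ) ≤ (Real.exp 1 * n / d) ^ d := by
  have hdR : (0 : ℝ) < d := by exact_mod_cast hd
  have hfac : (d : ℝ) ^ d / Real.exp 1 ^ d ≤ d.factorial := by
    have := Real.pow_div_factorial_le_exp (d : ℝ) hdR.le d
    rw [← Real.exp_one_pow, div_le_iff₀ (by positivity)] at this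
    rw [div_le_iff₀ (by positivity)]
    linarith
  calc (n.choose d : ℝ) ≤ (n : ℝ) ^ d / d.factorial := Nat.choose_le_pow_div d n
    _ ≤ (n : ℝ) ^ d / ((d : ℝ) ^ d / Real.exp 1 ^ d) := by gcongr
    _ = (Real.exp 1 * n / d) ^ d := by rw [div_pow, mul_pow]; field_simp

section SimplexGrid

variable {k : Type*} [Fintype k]

theorem exists_nat_sum_eq_sum_abs_sub_le [Nonempty k] {x : k → ℝ}
    (hx : ∀ a, 0 ≤ x a) {M : ℕ} (hxM : ∑ a, x a = M) :
    ∃ m : k → ℕ, ∑ a, m a = M ∧ ∑ a, |x a - m a| ≤ 2 * Fintype.card k := by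
  classical
  obtain ⟨a₀⟩ := ‹Nonempty k›
  obtain ⟨f, hf⟩ : ∃ f : k → ℕ, f = fun a => ⌊x a⌋₊ := ⟨_, rfl⟩
  have hf_le : ∀ a, (f a : ℝ) ≤ x a := fun a => by rw [hf]; exact Nat.floor_le (hx a)
  have hf_lt : ∀ a, x a < f a + 1 := fun a => by rw [hf]; exact Nat.lt_floor_add_one (x a)
  have hsum_f : ∑ a, f a ≤ M := by
    exact_mod_cast hxM ▸ (Finset.sum_le_sum fun a _ => hf_le a : ∑ a, (f a : ℝ) ≤ ∑ a, x a)
  -- The deficit `D` of the floors is put on `a₀`; it is below `|k|` and equals `∑ (x - f)`.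
  obtain ⟨D, hDdef⟩ : ∃ D, D = M - ∑ a, f a := ⟨_, rfl⟩
  have hD : (D : ℝ) = ∑ a, (x a - f a) := by
    rw [hDdef, Finset.sum_sub_distrib, hxM, Nat.cast_sub hsum_f, Nat.cast_sum]
  have hD_le : (D : ℝ) ≤ Fintype.card k := by
    calc (D : ℝ) = ∑ a, (x a - f a) := hD
      _ ≤ ∑ _a : k, (1 : ℝ) :=
        Finset.sum_le_sum fun a _ => by linarith [hf_lt a]
      _ = Fintype.card k := by rw [Finset.sum_const, Finset.card_univ, nsmul_one]
  refine ⟨fun a => f a + if a = a₀ then D else 0, ?_, ?_⟩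
  · rw [Finset.sum_add_distrib, Finset.sum_ite_eq', if_pos (Finset.mem_univ _)]
    omega
  · calc ∑ a, |x a - ((f a + if a = a₀ then D else 0 : ℕ) : ℝ)|
        ≤ ∑ a, ((x a - f a) + ((if a = a₀ then D else 0 : ℕ) : ℝ)) := by
          refine Finset.sum_le_sum fun a _ => ?_
          rw [Nat.cast_add, ← sub_sub]
          refine (abs_sub _ _).trans ?_
          rw [abs_of_nonneg (sub_nonneg.2 (hf_le a)), Nat.abs_cast]
      _ = 2 * D := by
          rw [Finset.sum_add_distrib, ← hD, ← Nat.cast_sum, Finset.sum_ite_eq',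
            if_pos (Finset.mem_univ _)]
          ring
      _ ≤ 2 * Fintype.card k := by linarith

variable [DecidableEq k]

/-- The probability vectors on `k` with coordinates in `(1/M) ℕ`, indexed by the multisets of
size `M` on `k`. -/
noncomputable def simplexGrid (k : Type*) [Fintype k] [DecidableEq k] (M : ℕ) :
    Finset (k → ℝ) :=
  Finset.univ.image fun s : Sym k M => fun a => ((s : Multiset k).count a : ℝ) / M

theorem simplexGrid_nonempty [Nonempty k] (M : ℕ) : (simplexGrid k M).Nonempty := by
  inhabit k
  exact Finset.univ_nonempty.image _

theorem card_simplexGrid_le (M : ℕ) :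
    (simplexGrid k M).card ≤ (Fintype.card k + M - 1).choose M :=
  Finset.card_image_le.trans (Sym.card_sym_eq_choose M).le

theorem log_card_simplexGrid_le (hk : 2 ≤ Fintype.card k) (M : ℕ) :
    Real.log (simplexGrid k M).card ≤ ((Fintype.card k : ℝ) - 1) *
      Real.log (Real.exp 1 * (M + Fintype.card k - 1) / (Fintype.card k - 1)) := by
  obtain ⟨d, hd⟩ : ∃ d, Fintype.card k = d + 1 := ⟨_, (Nat.sub_add_cancel (by omega)).symm⟩
  have hcard : (simplexGrid k M).card ≤ (d + M).choose d := by
    simpa [hd, Nat.choose_symm_add] using card_simplexGrid_le (k := k) M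
  calc Real.log (simplexGrid k M).card ≤ Real.log ((d + M).choose d) :=
        Real.log_natCast_le_log_natCast hcard
    _ ≤ Real.log ((Real.exp 1 * ((d + M : ℕ) : ℝ) / d) ^ d) := by
        have := Nat.choose_pos (Nat.le_add_right d M)
        gcongr
        exact Nat.choose_le_exp_one_mul_div_pow (by omega) _
    _ = ((Fintype.card k : ℝ) - 1) *
          Real.log (Real.exp 1 * (M + Fintype.card k - 1) / (Fintype.card k - 1)) := by
        rw [Real.log_pow, hd]
        push_cast
        ring_nf

theorem log_card_simplexGrid_ceil_le (hk : 2 ≤ Fintype.card k) {x : ℝ} (hx : 0 ≤ x) :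
    Real.log (simplexGrid k ⌈x⌉₊).card ≤ ((Fintype.card k : ℝ) - 1) *
      Real.log (Real.exp 1 * (x + Fintype.card k) / (Fintype.card k - 1)) := by
  have hk1 : (0 : ℝ) < Fintype.card k - 1 := by
    have : (2 : ℝ) ≤ Fintype.card k := by exact_mod_cast hk
    linarith
  refine (log_card_simplexGrid_le hk _).trans ?_
  have hceil : (⌈x⌉₊ : ℝ) < x + 1 := Nat.ceil_lt_add_one hx
  gcongr
  · exact div_pos (mul_pos (Real.exp_pos 1) (by linarith [(⌈x⌉₊).cast_nonneg (α := ℝ)])) hk1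
  · linarith

theorem mem_simplexGrid_of_sum_eq {M : ℕ} {m : k → ℕ} (hm : ∑ a, m a = M) :
    (fun a => (m a : ℝ) / M) ∈ simplexGrid k M := by
  set s := (Sym.equivNatSumOfFintype k M).symm ⟨m, hm⟩
  refine Finset.mem_image.2 ⟨s, Finset.mem_univ _, funext fun a => ?_⟩
  have hcount := Sym.coe_equivNatSumOfFintype_apply_apply k M s a
  rw [Equiv.apply_symm_apply] at hcount
  rw [← hcount]

theorem nonneg_and_sum_eq_one_of_mem_simplexGrid {M : ℕ} (hM : 0 < M) {q : k → ℝ}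
    (hq : q ∈ simplexGrid k M) : (∀ a, 0 ≤ q a) ∧ ∑ a, q a = 1 := by
  obtain ⟨s, -, rfl⟩ := Finset.mem_image.1 hq
  refine ⟨fun a => by positivity, ?_⟩
  have hcount : ∑ a, (s : Multiset k).count a = M := by
    rw [Multiset.sum_count_eq_card fun a _ => Finset.mem_univ a]
    exact s.2
  rw [← Finset.sum_div, ← Nat.cast_sum, hcount, div_self (by positivity)]

theorem exists_mem_simplexGrid_sum_abs_sub_le [Nonempty k] {M : ℕ} (hM : 0 < M) {p : k → ℝ}
    (hp0 : ∀ a, 0 ≤ p a) (hp1 : ∑ a, p a = 1) :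
    ∃ q ∈ simplexGrid k M, ∑ a, |p a - q a| ≤ 2 * Fintype.card k / M := by
  have hMpos : (0 : ℝ) < M := by exact_mod_cast hM
  obtain ⟨m, hm, hclose⟩ := exists_nat_sum_eq_sum_abs_sub_le (x := fun a => p a * M)
    (fun a => mul_nonneg (hp0 a) hMpos.le) (by rw [← Finset.sum_mul, hp1, one_mul])
  refine ⟨_, mem_simplexGrid_of_sum_eq hm, ?_⟩
  have hscale : ∀ a, |p a - m a / M| = |p a * M - m a| / M := fun a => by
    rw [← abs_of_pos hMpos, ← abs_div, abs_of_pos hMpos, sub_div, mul_div_cancel_right₀ _ hMpos.ne']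
  simp only [hscale, ← Finset.sum_div]
  exact div_le_div_of_nonneg_right hclose hMpos.le

end SimplexGrid

/-- The index `j` of the cell `[j/M, (j+1)/M)` of `[0, 1]` containing `x`, the last cell being
closed. -/
noncomputable def quantize (M : ℕ) [NeZero M] (x : ℝ) : Fin M :=
  ⟨min ⌊x * M⌋₊ (M - 1), by have := NeZero.pos M; omega⟩

theorem abs_sub_quantize_div_le {M : ℕ} [NeZero M] {x : ℝ} (hx : x ∈ Set.Icc (0 : ℝ) 1) :
    |x - quantize M x / M| ≤ 1 / M := by
  have hM : (0 : ℝ) < M := by exact_mod_cast NeZero.pos M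
  have hlow : (quantize M x : ℝ) ≤ x * M :=
    (Nat.cast_le.2 (min_le_left _ _)).trans (Nat.floor_le (by nlinarith [hx.1]))
  have hhigh : x * M ≤ quantize M x + 1 := by
    rcases le_total ⌊x * M⌋₊ (M - 1) with h | h
    · simp only [quantize, min_eq_left h]
      exact (Nat.lt_floor_add_one _).le
    · simp only [quantize, min_eq_right h]
      rw [Nat.cast_sub (NeZero.one_le), Nat.cast_one, sub_add_cancel]
      nlinarith [hx.2]
  rw [show x - quantize M x / M = (x * M - quantize M x) / M by field_simp, abs_div,
    abs_of_pos hM, div_le_div_iff_of_pos_right hM, abs_le]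
  constructor <;> linarith

section Cover

variable {N : Type*} {A : N → Type*} [Fintype N] [∀ i, Fintype (A i)]

theorem dist1_triangle (σ τ ρ : ∀ i, A i → ℝ) : dist1 σ ρ ≤ dist1 σ τ + dist1 τ ρ := by
  unfold dist1
  rw [← Finset.sum_add_distrib]
  gcongr with i
  rw [← Finset.sum_add_distrib]
  gcongr with a
  exact abs_sub_le _ _ _

noncomputable def gridUtil (M : ℕ) (γ : N × (∀ i, A i) → Fin M) : GameUtil N A :=
  ⟨fun i a => (γ (i, a) : ℝ) / M, fun i a =>
    ⟨by positivity, div_le_one_of_le₀ (Nat.cast_le.2 (γ (i, a)).2.le) (Nat.cast_nonneg M)⟩⟩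

noncomputable def quantizeUtil (M : ℕ) [NeZero M] (u : GameUtil N A) :
    N × (∀ i, A i) → Fin M :=
  fun p => quantize M (u.1 p.1 p.2)

theorem distMax_gridUtil_quantizeUtil_le [DecidableEq N] [Nonempty N] [∀ i, Nonempty (A i)]
    (M : ℕ) [NeZero M] (u : GameUtil N A) :
    distMax u.1 (gridUtil M (quantizeUtil M u)).1 ≤ 1 / M :=
  Finset.sup'_le _ _ fun i _ => Finset.sup'_le _ _ fun a _ => abs_sub_quantize_div_le (u.2 i a)

theorem dist1_gridUtil_quantizeUtil_le [DecidableEq N] [Nonempty N] [∀ i, Nonempty (A i)]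
    {f : GameUtil N A → ∀ i, A i → ℝ} {L : ℝ} (hL : 0 ≤ L)
    (hf : ∀ u v, dist1 (f u) (f v) ≤ L * distMax u.1 v.1) (M : ℕ) [NeZero M] (u : GameUtil N A) :
    dist1 (f u) (f (gridUtil M (quantizeUtil M u))) ≤ L / M :=
  (hf _ _).trans ((mul_le_mul_of_nonneg_left (distMax_gridUtil_quantizeUtil_le M u) hL).trans_eq
    (mul_one_div L M))

variable [DecidableEq N] [∀ i, DecidableEq (A i)]

theorem isMixedProfile_of_mem_piFinset_simplexGrid {M : N → ℕ} (hM : ∀ i, 0 < M i)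
    {σ : ∀ i, A i → ℝ} (hσ : σ ∈ Fintype.piFinset fun i => simplexGrid (A i) (M i)) :
    IsMixedProfile σ :=
  ⟨fun i => (nonneg_and_sum_eq_one_of_mem_simplexGrid (hM i) (Fintype.mem_piFinset.1 hσ i)).1,
    fun i => (nonneg_and_sum_eq_one_of_mem_simplexGrid (hM i) (Fintype.mem_piFinset.1 hσ i)).2⟩

theorem exists_mem_piFinset_simplexGrid_dist1_le [∀ i, Nonempty (A i)] {ε : ℝ} (hε : 0 < ε)
    {M : N → ℕ} (hM : ∀ i, 2 * Fintype.card N * Fintype.card (A i) / ε ≤ M i)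
    {σ : ∀ i, A i → ℝ} (hσ : IsMixedProfile σ) :
    ∃ τ ∈ Fintype.piFinset (fun i => simplexGrid (A i) (M i)), dist1 σ τ ≤ ε := by
  have hn : ∀ i : N, (0 : ℝ) < Fintype.card N := fun i =>
    Nat.cast_pos.2 (Fintype.card_pos_iff.2 ⟨i⟩)
  have hMpos : ∀ i, (0 : ℝ) < M i := fun i => (hM i).trans_lt' <|
    div_pos (mul_pos (mul_pos two_pos (hn i)) (Nat.cast_pos.2 Fintype.card_pos)) hε
  choose τ hτ hclose using fun i =>
    exists_mem_simplexGrid_sum_abs_sub_le (Nat.cast_pos.1 (hMpos i)) (hσ.1 i) (hσ.2 i)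
  refine ⟨τ, Fintype.mem_piFinset.2 hτ, ?_⟩
  calc dist1 σ τ ≤ ∑ i : N, ε / Fintype.card N := Finset.sum_le_sum fun i _ => by
        refine (hclose i).trans ?_
        rw [div_le_div_iff₀ (hMpos i) (hn i)]
        have := hM i
        rw [div_le_iff₀ hε] at this
        linarith
    _ ≤ ε := by
        rw [Finset.sum_const, Finset.card_univ, nsmul_eq_mul]
        rcases (Fintype.card N).eq_zero_or_pos with h | h
        · simp [h, hε.le]
        · rw [mul_div_cancel₀ _ (by positivity)]

end Cover

/-- The cover consists of the approximators `u ↦ f (q u)` with `f : G → P`. -/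
theorem exists_covers_of_factor_through {N : Type*} {A : N → Type*} [Fintype N]
    [∀ i, Fintype (A i)] {G : Type*} [Fintype G] (H : Set (NEApprox N A))
    (q : GameUtil N A → G) (rep : G → GameUtil N A) {P : Finset (∀ i, A i → ℝ)}
    (hP : ∀ σ ∈ P, IsMixedProfile σ) {ε δ r : ℝ}
    (hrep : ∀ h ∈ H, ∀ u, dist1 (h.1 u) (h.1 (rep (q u))) ≤ ε)
    (hnet : ∀ σ, IsMixedProfile σ → ∃ τ ∈ P, dist1 σ τ ≤ δ) (hr : ε + δ ≤ r) :
    ∃ C : Finset (NEApprox N A), Covers r C H ∧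
      Real.log C.card ≤ Fintype.card G * Real.log P.card := by
  classical
  let approx : (G → P) → NEApprox N A := fun f => ⟨fun u => f (q u), fun u => hP _ (f (q u)).2⟩
  refine ⟨Finset.univ.image approx, fun h hh => ?_, ?_⟩
  · choose τ hτP hτ using fun g => hnet _ (h.2 (rep g))
    refine ⟨approx fun g => ⟨τ g, hτP g⟩, Finset.mem_image_of_mem _ (Finset.mem_univ _),
      fun u => ?_⟩
    calc dist1 (h.1 u) (τ (q u))
        ≤ dist1 (h.1 u) (h.1 (rep (q u))) + dist1 (h.1 (rep (q u))) (τ (q u)) :=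
          dist1_triangle _ _ _
      _ ≤ r := (add_le_add (hrep h hh u) (hτ _)).trans hr
  · have hcard : (Finset.univ.image approx).card ≤ P.card ^ Fintype.card G :=
      Finset.card_image_le.trans_eq (by rw [Finset.card_univ, Fintype.card_fun, Fintype.card_coe])
    calc Real.log (Finset.univ.image approx).card ≤ Real.log ((P.card ^ Fintype.card G : ℕ)) :=
          Real.log_natCast_le_log_natCast hcard
      _ = Fintype.card G * Real.log P.card := by rw [Nat.cast_pow, Real.log_pow]

theorem lipschitz_class_covering_number_general
    {N : Type*} [Fintype N] [DecidableEq N] [Nonempty N]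
    {A : N → Type*} [∀ i, Fintype (A i)] [∀ i, Nonempty (A i)]
    (hA : ∀ i, 2 ≤ Fintype.card (A i))
    (H : Set (NEApprox N A)) (L : ℝ) (hL : 0 < L)
    (hlip : ∀ h ∈ H, ∀ u v : GameUtil N A, dist1 (h.1 u) (h.1 v) ≤ L * distMax u.1 v.1)
    (r : ℝ) (hr : 0 < r) :
    ∃ C : Finset (NEApprox N A), Covers r C H ∧
      Real.log C.card ≤
        (⌈4 * L / r⌉₊ : ℝ) ^ (Fintype.card N * Fintype.card (∀ i, A i)) *
          ∑ i : N, ((Fintype.card (A i) : ℝ) - 1) *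
            Real.log
              ((40 * Real.exp 1 * (Fintype.card N : ℝ) * (Fintype.card (A i) : ℝ) / r +
                  Real.exp 1 * (Fintype.card (A i) : ℝ)) /
                ((Fintype.card (A i) : ℝ) - 1)) := by
  classical
  set n : ℝ := (Fintype.card N : ℝ)
  set M₀ := ⌈4 * L / r⌉₊
  have : NeZero M₀ := ⟨(Nat.ceil_pos.2 (by positivity)).ne'⟩
  have hM₀ : L / M₀ ≤ r / 4 := by
    have := Nat.le_ceil (4 * L / r)
    rw [div_le_iff₀ hr] at this
    rw [div_le_iff₀ (Nat.cast_pos.2 (NeZero.pos M₀))]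
    linarith
  set M : N → ℕ := fun i => ⌈4 * n * Fintype.card (A i) / r⌉₊
  have hM : ∀ i, 0 < M i := fun i => Nat.ceil_pos.2 (by positivity)
  obtain ⟨C, hC, hcard⟩ := exists_covers_of_factor_through H (quantizeUtil M₀) (gridUtil M₀)
    (fun _ => isMixedProfile_of_mem_piFinset_simplexGrid hM)
    (fun h hh u => (dist1_gridUtil_quantizeUtil_le hL.le (hlip h hh) M₀ u).trans hM₀)
    (fun σ => exists_mem_piFinset_simplexGrid_dist1_le (half_pos hr)
      (fun i => (Nat.le_ceil _).trans_eq' (by ring)))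
    (by linarith : r / 4 + r / 2 ≤ r)
  refine ⟨C, hC, hcard.trans ?_⟩
  rw [Fintype.card_fun, Fintype.card_fin, Fintype.card_prod, Nat.cast_pow, Fintype.card_piFinset,
    Nat.cast_prod, Real.log_prod fun i _ =>
      Nat.cast_ne_zero.2 (simplexGrid_nonempty _).card_pos.ne']
  gcongr with i
  have hk1 : (0 : ℝ) < Fintype.card (A i) - 1 := by
    have : (2 : ℝ) ≤ Fintype.card (A i) := by exact_mod_cast hA i
    linarith
  refine (log_card_simplexGrid_ceil_le (hA i) (by positivity)).trans ?_
  gcongr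
  have : 0 ≤ Real.exp 1 * n * Fintype.card (A i) / r := by positivity
  linarith [show Real.exp 1 * (4 * n * Fintype.card (A i) / r + Fintype.card (A i)) =
    4 * (Real.exp 1 * n * Fintype.card (A i) / r) + Real.exp 1 * Fintype.card (A i) by ring,
    show 40 * Real.exp 1 * n * Fintype.card (A i) / r =
      40 * (Real.exp 1 * n * Fintype.card (A i) / r) by ring]

theorem lipschitz_class_covering_number
    {N : Type*} [Fintype N] [DecidableEq N] [Nonempty N]
    {A : N → Type*} [∀ i, Fintype (A i)] [∀ i, DecidableEq (A i)] [∀ i, Nonempty (A i)]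
    (hA : ∀ i, 2 ≤ Fintype.card (A i))
    (H : Set (NEApprox N A)) (L : ℝ) (hL : 0 < L)
    (hlip : ∀ h ∈ H, ∀ u v : GameUtil N A, dist1 (h.1 u) (h.1 v) ≤ L * distMax u.1 v.1)
    (r : ℝ) (hr : 0 < r) (hr4 : r < 4) :
    ∃ C : Finset (NEApprox N A), Covers r C H ∧
      Real.log C.card ≤
        (⌈4 * L / r⌉₊ : ℝ) ^ (Fintype.card N * Fintype.card (∀ i, A i)) *
          ∑ i : N, ((Fintype.card (A i) : ℝ) - 1) *
            Real.log
              ((40 * Real.exp 1 * (Fintype.card N : ℝ) * (Fintype.card (A i) : ℝ) / r +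
                  Real.exp 1 * (Fintype.card (A i) : ℝ)) /
                ((Fintype.card (A i) : ℝ) - 1)) :=
  lipschitz_class_covering_number_general hA H L hL hlip r hr
end
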